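/- arXiv:2412.04758 — 3 statements merged into one kernel-verified Lean document; each statement's English description precedes it below -/
import Mathlib

section
/- Maximum entropy goal-directedness is translation and scale invariant: if two finite decision problems are identical except that the utility function of the second is U₂ = a·U₁ + b for real numbers a ≠ 0 and b, then for every policy π, MEG with respect to U₁ equals MEG with respect to U₂. -/
/-! Replacing `U` by `a * U + b` moves the expected utility of every policy by the same map
`u ↦ a * u + b * ∑ s, P s`, which is injective for `a ≠ 0`. So it preserves which policies have
equal expected utility, hence the maximum-entropy policy set, through which alone MEG depends on
the utility. -/

open Finset Real

variable {S D : Type*}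

/-- `p` is a probability distribution on a finite type. -/
def IsDist [Fintype D] (p : D → ℝ) : Prop := (∀ d, 0 ≤ p d) ∧ ∑ d, p d = 1

/-- A policy assigns a distribution over actions to every state. -/
def IsPolicy [Fintype D] (q0 : S → D → ℝ) : Prop := ∀ s, IsDist (q0 s)

/-- Expected utility of policy `q0` under state distribution `P` and utility `U`. -/
def expUtil [Fintype S] [Fintype D] (P : S → ℝ) (q0 : S → D → ℝ) (U : S → D → ℝ) : ℝ :=
  ∑ s, P s * ∑ d, q0 s d * U s d

/-- Conditional (causal) entropy of a policy. -/
noncomputable def condEnt [Fintype S] [Fintype D] (P : S → ℝ) (q0 : S → D → ℝ) : ℝ :=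
  -∑ s, P s * ∑ d, q0 s d * Real.log (q0 s d)

/-- The maximum-entropy policy set for utility `U`: policies that maximize conditional
entropy among all policies attaining the same expected utility. -/
def maxentSet [Fintype S] [Fintype D] (P : S → ℝ) (U : S → D → ℝ) : Set (S → D → ℝ) :=
  {q1 | IsPolicy q1 ∧ ∀ q2, IsPolicy q2 → expUtil P q2 U = expUtil P q1 U →
    condEnt P q2 ≤ condEnt P q1}

/-- Predictive accuracy of `q1` for predicting `q0`, relative to the uniform policy. -/
noncomputable def predAcc [Fintype S] [Fintype D] (P : S → ℝ) (q0 q1 : S → D → ℝ) : ℝ :=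
  ∑ s, P s * ∑ d, q0 s d * (Real.log (q1 s d) + Real.log (Fintype.card D))

/-- Maximum entropy goal-directedness of `q0` with respect to utility `U`. -/
noncomputable def MEG [Fintype S] [Fintype D] (P : S → ℝ) (U : S → D → ℝ) (q0 : S → D → ℝ) : ℝ :=
  sSup {x | ∃ q1 ∈ maxentSet P U, x = predAcc P q0 q1}

section

variable [Fintype S] [Fintype D]

lemma expUtil_affine (P : S → ℝ) (U : S → D → ℝ) (a b : ℝ) {q : S → D → ℝ} (hq : IsPolicy q) :
    expUtil P q (fun s d => a * U s d + b) = a * expUtil P q U + b * ∑ s, P s := by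
  have hsum (s : S) : ∑ d, q s d * (a * U s d + b) = a * ∑ d, q s d * U s d + b := by
    simp only [mul_add, sum_add_distrib, ← sum_mul, (hq s).2, mul_sum, one_mul, mul_left_comm]
  simp only [expUtil, hsum]
  rw [mul_sum, mul_sum, ← sum_add_distrib]
  exact sum_congr rfl fun s _ => by ring

lemma expUtil_affine_eq_iff (P : S → ℝ) (U : S → D → ℝ) {a : ℝ} (b : ℝ) (ha : a ≠ 0)
    {q q' : S → D → ℝ} (hq : IsPolicy q) (hq' : IsPolicy q') :
    expUtil P q (fun s d => a * U s d + b) = expUtil P q' (fun s d => a * U s d + b) ↔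
      expUtil P q U = expUtil P q' U := by
  rw [expUtil_affine P U a b hq, expUtil_affine P U a b hq', add_left_inj, mul_right_inj' ha]

lemma maxentSet_affine (P : S → ℝ) (U : S → D → ℝ) {a : ℝ} (b : ℝ) (ha : a ≠ 0) :
    maxentSet P (fun s d => a * U s d + b) = maxentSet P U := by
  ext q
  exact and_congr_right fun hq => forall_congr' fun q' => imp_congr_right fun hq' =>
    imp_congr_left (expUtil_affine_eq_iff P U b ha hq' hq)

end

theorem meg_translation_scale_invariant_general [Fintype S] [Fintype D]
    (P : S → ℝ)
    (U₁ : S → D → ℝ) (a b : ℝ) (ha : a ≠ 0)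
    (pol : S → D → ℝ) :
    MEG P U₁ pol = MEG P (fun s d => a * U₁ s d + b) pol := by
  rw [MEG, MEG, maxentSet_affine P U₁ b ha]

/-- MEG is translation and scale invariant. -/
theorem meg_translation_scale_invariant [Fintype S] [Fintype D]
    (P : S → ℝ) (hP : IsDist P)
    (U₁ : S → D → ℝ) (a b : ℝ) (ha : a ≠ 0)
    (pol : S → D → ℝ) (hpol : IsPolicy pol) :
    MEG P U₁ pol = MEG P (fun s d => a * U₁ s d + b) pol :=
  meg_translation_scale_invariant_general P U₁ a b ha pol
end

section
/- No goal-directedness without causal influence: if the utility function does not depend on the action, i.e., U(s,d) = U(s,d') for all s and all d, d', then MEG_U(π) = 0 for every policy π. -/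
open Finset Real

variable {S D : Type*}

/-! When `U` ignores the action, every policy has the same expected utility, so the
maximum-entropy policies are simply the maximisers of conditional entropy. Since `negMulLog` is
strictly concave and every state has positive probability, the only maximiser is the uniform
policy, and the uniform policy predicts any policy with accuracy `log |D|⁻¹ + log |D| = 0`. -/

lemma Real.negMulLog_inv (x : ℝ) : negMulLog x⁻¹ = x⁻¹ * log x := by
  simp [negMulLog, log_inv]

namespace IsDist

variable [Fintype D] [Nonempty D] {q : D → ℝ}

/-- Jensen's inequality for `negMulLog` with uniform weights. -/
lemma sum_negMulLog_le_log_card (hq : IsDist q) :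
    ∑ d, negMulLog (q d) ≤ log (Fintype.card D) := by
  have hn : (0 : ℝ) < Fintype.card D := by positivity
  have h := concaveOn_negMulLog.le_map_sum (t := univ)
    (w := fun _ ↦ (Fintype.card D : ℝ)⁻¹) (p := q) (fun _ _ ↦ by positivity) (by simp)
    (fun d _ ↦ hq.1 d)
  simp only [smul_eq_mul, ← mul_sum, hq.2, mul_one, negMulLog_inv] at h
  exact le_of_mul_le_mul_left h (by positivity)

lemma eq_inv_card_of_log_card_le_sum_negMulLog (hq : IsDist q)
    (h : log (Fintype.card D) ≤ ∑ d, negMulLog (q d)) :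
    q = fun _ ↦ (Fintype.card D : ℝ)⁻¹ := by
  have hn : (0 : ℝ) < Fintype.card D := by positivity
  have hconst := strictConcaveOn_negMulLog.eq_of_map_sum_eq (t := univ)
    (w := fun _ ↦ (Fintype.card D : ℝ)⁻¹) (p := q) (fun _ _ ↦ by positivity) (by simp)
    (fun d _ ↦ hq.1 d) (by
      simp only [smul_eq_mul, ← mul_sum, hq.2, mul_one, negMulLog_inv]
      gcongr)
  funext d
  have hsum : ∑ d' : D, q d' = Fintype.card D * q d := by
    simp [sum_congr rfl fun d' _ ↦ hconst (mem_univ d') (mem_univ d)]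
  rw [hq.2] at hsum
  field_simp
  linarith

end IsDist

section Policies

variable [Fintype D]

noncomputable def uniformPolicy : S → D → ℝ := fun _ _ ↦ (Fintype.card D : ℝ)⁻¹

lemma isPolicy_uniformPolicy [Nonempty D] : IsPolicy (uniformPolicy : S → D → ℝ) := fun _ ↦
  ⟨fun _ ↦ inv_nonneg.2 (Nat.cast_nonneg _), by simp [uniformPolicy]⟩

variable [Fintype S] {P : S → ℝ}

lemma condEnt_eq_sum_negMulLog (q : S → D → ℝ) :
    condEnt P q = ∑ s, P s * ∑ d, negMulLog (q s d) := by
  simp only [condEnt, negMulLog, neg_mul, sum_neg_distrib, mul_neg]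

lemma condEnt_uniformPolicy [Nonempty D] :
    condEnt P (uniformPolicy : S → D → ℝ) = ∑ s, P s * log (Fintype.card D) := by
  simp [condEnt_eq_sum_negMulLog, uniformPolicy, negMulLog_inv]

lemma condEnt_le_condEnt_uniformPolicy [Nonempty D] (hP : ∀ s, 0 ≤ P s) {q : S → D → ℝ}
    (hq : IsPolicy q) : condEnt P q ≤ condEnt P (uniformPolicy : S → D → ℝ) := by
  rw [condEnt_uniformPolicy, condEnt_eq_sum_negMulLog]
  gcongr with s
  · exact hP s
  · exact (hq s).sum_negMulLog_le_log_card

lemma eq_uniformPolicy_of_condEnt_uniformPolicy_le [Nonempty D] (hP : ∀ s, 0 < P s)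
    {q : S → D → ℝ} (hq : IsPolicy q)
    (h : condEnt P (uniformPolicy : S → D → ℝ) ≤ condEnt P q) : q = uniformPolicy := by
  rw [condEnt_uniformPolicy, condEnt_eq_sum_negMulLog] at h
  have hle : ∀ s ∈ univ, P s * ∑ d, negMulLog (q s d) ≤ P s * log (Fintype.card D) :=
    fun s _ ↦ mul_le_mul_of_nonneg_left (hq s).sum_negMulLog_le_log_card (hP s).le
  have heq := (sum_eq_sum_iff_of_le hle).1 ((sum_le_sum hle).antisymm h)
  funext s
  exact (hq s).eq_inv_card_of_log_card_le_sum_negMulLog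
    (mul_left_cancel₀ (hP s).ne' (heq s (mem_univ s))).ge

lemma expUtil_eq_sum_of_forall_eq {U : S → D → ℝ} (hU : ∀ s, ∀ d d' : D, U s d = U s d')
    {q : S → D → ℝ} (hq : IsPolicy q) (d₀ : D) :
    expUtil P q U = ∑ s, P s * U s d₀ := by
  simp only [expUtil, fun s d ↦ hU s d d₀, ← sum_mul, (hq _).2, one_mul]

theorem maxentSet_eq_singleton_uniformPolicy [Nonempty D] (hP : ∀ s, 0 < P s)
    {U : S → D → ℝ} (hU : ∀ s, ∀ d d' : D, U s d = U s d') :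
    maxentSet P U = {uniformPolicy} := by
  obtain ⟨d₀⟩ := ‹Nonempty D›
  have hEU {q} (hq : IsPolicy q) := expUtil_eq_sum_of_forall_eq (P := P) hU hq d₀
  ext q
  constructor
  · rintro ⟨hq, hmax⟩
    refine eq_uniformPolicy_of_condEnt_uniformPolicy_le hP hq ?_
    exact hmax _ isPolicy_uniformPolicy (by rw [hEU hq, hEU isPolicy_uniformPolicy])
  · rintro rfl
    exact ⟨isPolicy_uniformPolicy,
      fun _ hq _ ↦ condEnt_le_condEnt_uniformPolicy (fun s ↦ (hP s).le) hq⟩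

lemma predAcc_uniformPolicy (q : S → D → ℝ) : predAcc P q uniformPolicy = 0 := by
  simp [predAcc, uniformPolicy, log_inv]

end Policies

theorem meg_zero_of_no_influence_general [Fintype S] [Fintype D] [Nonempty D]
    (P : S → ℝ) (hPpos : ∀ s, 0 < P s)
    (U : S → D → ℝ) (hU : ∀ s, ∀ d d' : D, U s d = U s d')
    (pol : S → D → ℝ) :
    MEG P U pol = 0 := by
  simp [MEG, maxentSet_eq_singleton_uniformPolicy hPpos hU, predAcc_uniformPolicy]

/-- no goal-directedness without causal influence. If the utility does not
depend on the action, then MEG is zero for every policy. -/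
theorem meg_zero_of_no_influence [Fintype S] [Fintype D] [Nonempty D]
    (P : S → ℝ) (hP : IsDist P) (hPpos : ∀ s, 0 < P s)
    (U : S → D → ℝ) (hU : ∀ s, ∀ d d' : D, U s d = U s d')
    (pol : S → D → ℝ) (hpol : IsPolicy pol) :
    MEG P U pol = 0 :=
  meg_zero_of_no_influence_general P hPpos U hU pol
end

section
/- The derivative of the expected utility of the Boltzmann policy with respect to the rationality parameter is nonnegative: d/dβ E_{π_β}[U] = Σ_s P(s)·Var_{π_β(·|s)}(U(s,·)) ≥ 0. Hence β ↦ E_{π_β}[U] is monotone nondecreasing. -/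
open Finset Real

variable {S D : Type*}

/-- The Boltzmann (soft-optimal) policy with rationality parameter `β` for utility `U`. -/
noncomputable def boltz [Fintype D] (U : S → D → ℝ) (β : ℝ) (s : S) (d : D) : ℝ :=
  Real.exp (β * U s d) / ∑ d', Real.exp (β * U s d')

theorem IsDist.sq_sum_mul_le_sum_mul_sq [Fintype D] {q : D → ℝ} (hq : IsDist q) (u : D → ℝ) :
    (∑ d, q d * u d) ^ 2 ≤ ∑ d, q d * u d ^ 2 := by
  simpa only [smul_eq_mul] using
    (even_two.convexOn_pow (𝕜 := ℝ)).map_sum_le (fun d _ => hq.1 d) hq.2 fun _ _ => Set.mem_univ _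

lemma sum_exp_mul_pos [Fintype D] [Nonempty D] (u : D → ℝ) (β : ℝ) :
    0 < ∑ d, exp (β * u d) :=
  sum_pos (fun _ _ => exp_pos _) univ_nonempty

lemma boltz_isDist [Fintype D] [Nonempty D] (U : S → D → ℝ) (β : ℝ) (s : S) :
    IsDist (boltz U β s) := by
  have hZ := sum_exp_mul_pos (U s) β
  refine ⟨fun d => div_nonneg (exp_pos _).le hZ.le, ?_⟩
  simp only [boltz]
  rw [← sum_div, div_self hZ.ne']

lemma sum_boltz_mul_pow [Fintype D] (U : S → D → ℝ) (β : ℝ) (s : S) (k : ℕ) :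
    ∑ d, boltz U β s d * U s d ^ k = (∑ d, exp (β * U s d) * U s d ^ k) / ∑ d, exp (β * U s d) := by
  rw [sum_div]
  exact sum_congr rfl fun d _ => div_mul_eq_mul_div _ _ _

lemma hasDerivAt_sum_exp_mul_mul_pow [Fintype D] (u : D → ℝ) (k : ℕ) (β : ℝ) :
    HasDerivAt (fun b => ∑ d, exp (b * u d) * u d ^ k) (∑ d, exp (β * u d) * u d ^ (k + 1)) β := by
  refine HasDerivAt.fun_sum fun d _ => ?_
  exact ((hasDerivAt_mul_const (u d)).exp.mul_const (u d ^ k)).congr_deriv (by ring)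

/-- The mean of `U s` under the Boltzmann policy is `Z'/Z` for the partition function
`Z β = ∑ d, exp (β * U s d)`, so its derivative `Z''/Z - (Z'/Z)²` is the variance. -/
lemma hasDerivAt_sum_boltz_mul [Fintype D] [Nonempty D] (U : S → D → ℝ) (s : S) (β : ℝ) :
    HasDerivAt (fun b => ∑ d, boltz U b s d * U s d)
      (∑ d, boltz U β s d * U s d ^ 2 - (∑ d, boltz U β s d * U s d) ^ 2) β := by
  have hZ_ne := (sum_exp_mul_pos (U s) β).ne'
  have hZ_deriv := hasDerivAt_sum_exp_mul_mul_pow (U s) 0 β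
  simp only [pow_zero, mul_one, zero_add, pow_one] at hZ_deriv
  have hquot := (hasDerivAt_sum_exp_mul_mul_pow (U s) 1 β).fun_div hZ_deriv hZ_ne
  simp only [pow_one, one_add_one_eq_two] at hquot
  have hmean : ∀ b, ∑ d, boltz U b s d * U s d
      = (∑ d, exp (b * U s d) * U s d) / ∑ d, exp (b * U s d) := by
    simpa only [pow_one] using fun b => sum_boltz_mul_pow U b s 1
  rw [funext hmean, hmean, sum_boltz_mul_pow U β s 2]
  refine hquot.congr_deriv ?_
  field_simp

lemma hasDerivAt_expUtil_boltz [Fintype S] [Fintype D] [Nonempty D] (P : S → ℝ)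
    (U : S → D → ℝ) (β : ℝ) :
    HasDerivAt (fun b => expUtil P (boltz U b) U)
      (∑ s, P s * (∑ d, boltz U β s d * U s d ^ 2 - (∑ d, boltz U β s d * U s d) ^ 2)) β :=
  HasDerivAt.fun_sum fun s _ => (hasDerivAt_sum_boltz_mul U s β).const_mul (P s)

/-- the derivative in `β` of the expected utility of the Boltzmann policy is
the `P`-average of the variance of `U(s,·)` under `π_β(·|s)`, hence nonnegative, so
`β ↦ E_{π_β}[U]` is monotone nondecreasing. -/
theorem boltz_expUtil_deriv_nonneg [Fintype S] [Fintype D] [Nonempty D]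
    (P : S → ℝ) (hP : IsDist P) (U : S → D → ℝ) :
    (∀ β : ℝ, HasDerivAt (fun b => expUtil P (boltz U b) U)
      (∑ s, P s * (∑ d, boltz U β s d * (U s d) ^ 2 - (∑ d, boltz U β s d * U s d) ^ 2)) β) ∧
    (∀ β : ℝ, 0 ≤ ∑ s, P s *
      (∑ d, boltz U β s d * (U s d) ^ 2 - (∑ d, boltz U β s d * U s d) ^ 2)) ∧
    Monotone (fun β => expUtil P (boltz U β) U) := by
  have hderiv := hasDerivAt_expUtil_boltz P U
  have hvar : ∀ β : ℝ, 0 ≤ ∑ s, P s *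
      (∑ d, boltz U β s d * (U s d) ^ 2 - (∑ d, boltz U β s d * U s d) ^ 2) := fun β =>
    sum_nonneg fun s _ => mul_nonneg (hP.1 s)
      (sub_nonneg.2 ((boltz_isDist U β s).sq_sum_mul_le_sum_mul_sq (U s)))
  exact ⟨hderiv, hvar, monotone_of_hasDerivAt_nonneg hderiv hvar⟩
end
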